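/- Let G = (X, Y, E) be a Y-convex bipartite graph with Y = {y_1 < ⋯ < y_m} that admits a red dominating set, with X in lex-convex ordering. Call a finite strictly increasing sequence u_1 < u_2 < ⋯ < u_k of X a valid chain if left(u_1) = y_1, right(u_k) = y_m, and left(u_i) < left(u_{i+1}) ≤ right(u_i) + 1 ≤ right(u_{i+1}) for each i = 1, …, k−1. Let k* be the minimum length of a valid chain. Then a set D ⊆ X is a minimum cardinality red dominating set of G if and only if |D| = k* and the increasing enumeration of D is a valid chain. -/

import Mathlib

/-!
Let `D` dominate `Y`. Starting from the element of `D` with `left = y_1` reaching farthest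
right, and repeatedly passing to the element of `D` that contains `right + 1` and reaches
farthest right, one extracts from `D` a valid chain; lex-convexity makes it increasing.
Conversely the consecutive intervals of a valid chain overlap or abut, so a valid chain
dominates `Y`. Hence `k*` is the minimum size of a red dominating set, and a minimum one
is exactly the vertex set of the valid chain it contains.
-/

/-- A valid chain in the `Y`-convex bipartite graph with `X = Fin n`, `Y = Fin (m+1)`
and interval neighbourhoods `[l x, r x]`: a nonempty strictly increasing list
`u_1 < ⋯ < u_k` of vertices of `X` with `left(u_1) = y_1`, `right(u_k) = y_m`, and
`left(u_i) < left(u_{i+1}) ≤ right(u_i) + 1 ≤ right(u_{i+1})` for all `i`. -/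
def ValidChain {n m : ℕ} (l r : Fin n → Fin (m + 1)) (L : List (Fin n)) : Prop :=
  ∃ hne : L ≠ [],
    L.Chain' (· < ·) ∧
    l (L.head hne) = 0 ∧
    r (L.getLast hne) = Fin.last m ∧
    L.Chain' fun a b =>
      l a < l b ∧ (l b : ℕ) ≤ (r a : ℕ) + 1 ∧ (r a : ℕ) + 1 ≤ (r b : ℕ)

section

variable {n m : ℕ}

def Dominates (l r : Fin n → Fin (m + 1)) (D : Finset (Fin n)) : Prop :=
  ∀ y : Fin (m + 1), ∃ x ∈ D, l x ≤ y ∧ y ≤ r x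

def IsLexConvex (l r : Fin n → Fin (m + 1)) : Prop :=
  ∀ i j : Fin n, i < j → l i < l j ∨ (l i = l j ∧ r i ≤ r j)

def ChainStep (l r : Fin n → Fin (m + 1)) (a b : Fin n) : Prop :=
  l a < l b ∧ (l b : ℕ) ≤ (r a : ℕ) + 1 ∧ (r a : ℕ) + 1 ≤ (r b : ℕ)

def IsFarthestReaching (l r : Fin n → Fin (m + 1)) (D : Finset (Fin n)) (a : Fin n) : Prop :=
  ∀ x ∈ D, l x ≤ l a → r x ≤ r a

variable {l r : Fin n → Fin (m + 1)}

theorem exists_mem_le_le_of_isChain :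
    ∀ (L : List (Fin n)) (hne : L ≠ []), L.IsChain (fun a b => (l b : ℕ) ≤ (r a : ℕ) + 1) →
      ∀ y : Fin (m + 1), l (L.head hne) ≤ y → y ≤ r (L.getLast hne) →
        ∃ x ∈ L, l x ≤ y ∧ y ≤ r x
  | [a], _, _, _, hly, hyr => ⟨a, List.mem_singleton_self a, hly, hyr⟩
  | a :: b :: t, _, hL, y, hly, hyr => by
    obtain ⟨hab, hbt⟩ := List.isChain_cons_cons.mp hL
    rcases le_or_gt y (r a) with hya | hay
    · exact ⟨a, List.mem_cons_self, hly, hya⟩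
    · have hby : l b ≤ y := Fin.le_def.mpr (by simp only [Fin.lt_def] at hay; omega)
      obtain ⟨x, hx, hxy⟩ :=
        exists_mem_le_le_of_isChain (b :: t) (List.cons_ne_nil b t) hbt y hby hyr
      exact ⟨x, List.mem_cons_of_mem a hx, hxy⟩

theorem ValidChain.dominates {L : List (Fin n)} (hL : ValidChain l r L) :
    Dominates l r L.toFinset := by
  obtain ⟨hne, -, hhead, hlast, hstep⟩ := hL
  intro y
  obtain ⟨x, hx, hxy⟩ := exists_mem_le_le_of_isChain L hne (hstep.imp fun _ _ h => h.2.1) y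
    (hhead ▸ Fin.zero_le y) (hlast ▸ Fin.le_last y)
  exact ⟨x, List.mem_toFinset.mpr hx, hxy⟩

theorem ValidChain.pairwise_lt {L : List (Fin n)} (hL : ValidChain l r L) :
    L.Pairwise (· < ·) :=
  List.isChain_iff_pairwise.mp hL.2.1

theorem ValidChain.sort_toFinset {L : List (Fin n)} (hL : ValidChain l r L) :
    L.toFinset.sort (· ≤ ·) = L :=
  (List.toFinset_sort _ hL.pairwise_lt.nodup).mpr (hL.pairwise_lt.imp le_of_lt)

theorem ValidChain.card_toFinset {L : List (Fin n)} (hL : ValidChain l r L) :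
    L.toFinset.card = L.length :=
  List.toFinset_card_of_nodup hL.pairwise_lt.nodup

theorem ChainStep.lt (hlex : IsLexConvex l r) {a b : Fin n} (h : ChainStep l r a b) : a < b := by
  by_contra! hba
  rcases hba.lt_or_eq with hba | rfl
  · rcases hlex b a hba with hl | hl
    · exact lt_asymm h.1 hl
    · exact h.1.ne hl.1.symm
  · exact lt_irrefl _ h.1

theorem Dominates.exists_chainStep {D : Finset (Fin n)} (hD : Dominates l r D) {a : Fin n}
    (hra : (r a : ℕ) < m) (ha : IsFarthestReaching l r D a) :
    ∃ b ∈ D, ChainStep l r a b ∧ IsFarthestReaching l r D b := by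
  let y : Fin (m + 1) := ⟨r a + 1, by omega⟩
  have hcover : (D.filter fun x => l x ≤ y ∧ y ≤ r x).Nonempty := by
    obtain ⟨x, hx, hxy⟩ := hD y
    exact ⟨x, Finset.mem_filter.mpr ⟨hx, hxy⟩⟩
  obtain ⟨b, hb, hbmax⟩ := Finset.exists_max_image _ r hcover
  obtain ⟨hbD, hby, hyb⟩ := Finset.mem_filter.mp hb
  have hyb : (r a : ℕ) + 1 ≤ r b := hyb
  have hlab : l a < l b := by
    by_contra! hba
    have := Fin.le_def.mp (ha b hbD hba)
    omega
  refine ⟨b, hbD, ⟨hlab, hby, hyb⟩, fun x hx hxb => ?_⟩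
  by_cases hxy : (r a : ℕ) + 1 ≤ r x
  · exact hbmax x (Finset.mem_filter.mpr ⟨hx, hxb.trans hby, hxy⟩)
  · exact Fin.le_def.mpr (by omega)

theorem Dominates.exists_chain_from {D : Finset (Fin n)} (hD : Dominates l r D) {a : Fin n}
    (haD : a ∈ D) (ha : IsFarthestReaching l r D a) :
    ∃ t : List (Fin n), (∀ x ∈ a :: t, x ∈ D) ∧ (a :: t).IsChain (ChainStep l r) ∧
      r ((a :: t).getLast (List.cons_ne_nil a t)) = Fin.last m := by
  by_cases hra : (r a : ℕ) < m
  · obtain ⟨b, hbD, hab, hb⟩ := hD.exists_chainStep hra ha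
    have : m - (r b : ℕ) < m - (r a : ℕ) := by have := hab.2.2; omega
    obtain ⟨t, htD, hchain, hlast⟩ := hD.exists_chain_from hbD hb
    refine ⟨b :: t, ?_, List.isChain_cons_cons.mpr ⟨hab, hchain⟩, ?_⟩
    · simpa [haD] using htD
    · rwa [List.getLast_cons_cons]
  · exact ⟨[], by simpa using haD, List.isChain_singleton a, Fin.ext (by simp; omega)⟩
termination_by m - (r a : ℕ)

theorem Dominates.exists_validChain_subset (hlex : IsLexConvex l r) {D : Finset (Fin n)}
    (hD : Dominates l r D) : ∃ L : List (Fin n), ValidChain l r L ∧ L.toFinset ⊆ D := by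
  have hstart : (D.filter fun x => l x = 0).Nonempty := by
    obtain ⟨x, hx, hx0, -⟩ := hD 0
    exact ⟨x, Finset.mem_filter.mpr ⟨hx, nonpos_iff_eq_zero.mp hx0⟩⟩
  obtain ⟨a, ha, hamax⟩ := Finset.exists_max_image _ r hstart
  obtain ⟨haD, ha0⟩ := Finset.mem_filter.mp ha
  have hfar : IsFarthestReaching l r D a := fun x hx hxa =>
    hamax x (Finset.mem_filter.mpr ⟨hx, nonpos_iff_eq_zero.mp (ha0 ▸ hxa)⟩)
  obtain ⟨t, htD, hchain, hlast⟩ := hD.exists_chain_from haD hfar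
  refine ⟨a :: t, ⟨List.cons_ne_nil a t, hchain.imp fun _ _ => ChainStep.lt hlex, ha0, hlast,
    hchain⟩, fun x hx => htD x (List.mem_toFinset.mp hx)⟩

theorem Dominates.le_card_of_isLeast (hlex : IsLexConvex l r) {kstar : ℕ}
    (hks : IsLeast {j : ℕ | ∃ L : List (Fin n), ValidChain l r L ∧ L.length = j} kstar)
    {D : Finset (Fin n)} (hD : Dominates l r D) : kstar ≤ D.card := by
  obtain ⟨L, hL, hLD⟩ := hD.exists_validChain_subset hlex
  calc kstar ≤ L.length := hks.2 ⟨L, hL, rfl⟩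
    _ = L.toFinset.card := hL.card_toFinset.symm
    _ ≤ D.card := Finset.card_le_card hLD

end

theorem stmt10_general {n m : ℕ} (l r : Fin n → Fin (m + 1))
    (hlex : ∀ i j : Fin n, i < j → l i < l j ∨ (l i = l j ∧ r i ≤ r j))
    (kstar : ℕ)
    (hks : IsLeast {j : ℕ | ∃ L : List (Fin n), ValidChain l r L ∧ L.length = j} kstar) :
    ∀ D : Finset (Fin n),
      ((∀ y : Fin (m + 1), ∃ x ∈ D, l x ≤ y ∧ y ≤ r x) ∧
        ∀ D' : Finset (Fin n),
          (∀ y : Fin (m + 1), ∃ x ∈ D', l x ≤ y ∧ y ≤ r x) → D.card ≤ D'.card) ↔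
      (D.card = kstar ∧ ValidChain l r (D.sort (· ≤ ·))) := by
  obtain ⟨Lmin, hLmin, rfl⟩ := hks.1
  have hlb : ∀ D', Dominates l r D' → Lmin.length ≤ D'.card := fun _ hD' =>
    Dominates.le_card_of_isLeast hlex hks hD'
  intro D
  constructor
  · rintro ⟨hD, hDmin⟩
    obtain ⟨L, hL, hLD⟩ := Dominates.exists_validChain_subset hlex hD
    have hDL : L.toFinset = D := Finset.eq_of_subset_of_card_le hLD (hDmin _ hL.dominates)
    refine ⟨le_antisymm ?_ (hlb D hD), ?_⟩
    · exact hLmin.card_toFinset ▸ hDmin _ hLmin.dominates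
    · rwa [← hDL, hL.sort_toFinset]
  · rintro ⟨hcard, hD⟩
    refine ⟨fun y => ?_, fun D' hD' => hcard ▸ hlb D' hD'⟩
    obtain ⟨x, hx, hxy⟩ := hD.dominates y
    exact ⟨x, (Finset.mem_sort _).mp (List.mem_toFinset.mp hx), hxy⟩

/-- Let `G` be a `Y`-convex bipartite graph (`X = Fin n`, `Y = Fin (m+1)`, interval
neighbourhoods `[l x, r x]`) admitting a red dominating set, with `X` in lex-convex
ordering, and let `k*` be the minimum length of a valid chain.  Then `D ⊆ X` is a
minimum cardinality red dominating set of `G` iff `|D| = k*` and the increasing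
enumeration of `D` is a valid chain. -/
theorem stmt10 {n m : ℕ} (l r : Fin n → Fin (m + 1)) (hlr : ∀ x, l x ≤ r x)
    (hlex : ∀ i j : Fin n, i < j → l i < l j ∨ (l i = l j ∧ r i ≤ r j))
    (hdom : ∃ D : Finset (Fin n), ∀ y : Fin (m + 1), ∃ x ∈ D, l x ≤ y ∧ y ≤ r x)
    (kstar : ℕ)
    (hks : IsLeast {j : ℕ | ∃ L : List (Fin n), ValidChain l r L ∧ L.length = j} kstar) :
    ∀ D : Finset (Fin n),
      ((∀ y : Fin (m + 1), ∃ x ∈ D, l x ≤ y ∧ y ≤ r x) ∧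
        ∀ D' : Finset (Fin n),
          (∀ y : Fin (m + 1), ∃ x ∈ D', l x ≤ y ∧ y ≤ r x) → D.card ≤ D'.card) ↔
      (D.card = kstar ∧ ValidChain l r (D.sort (· ≤ ·))) :=
  stmt10_general l r hlex kstar hks
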